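/- arXiv:2605.17473 — 2 statements merged into one kernel-verified Lean document; each statement's English description precedes it below -/
import Mathlib

section
/- Let π : (X, d_X, T) → (Y, S) be a factor map between compact dynamical systems. Define the relative conditional upper metric mean dimension by mdim*(X,T|π,d_X) = limsup_{ε→0} (1/log(1/ε)) · inf_{diam(U,d_X) ≤ ε} h(T, U | V ∨ π), for any fixed finite open cover V of X, and the relative upper metric mean dimension mdim(X,T|π,d_X) using V = {X}. Then mdim*(X,T|π,d_X) = mdim(X,T|π,d_X); in particular the left side is independent of the choice of V. -/
/-!
For every finite cover `U`, conditioning on the finer family `V^n` can only lower the count,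
while covering a fibre first by `V^n` and then each piece by `U^n` gives
`N(U^n | π) ≤ |V|^n · N(U^n | V^n ∨ π)`. Hence
`h(T, U | V ∨ π) ≤ h(T, U | π) ≤ log |V| + h(T, U | V ∨ π)`, and the same bounds hold for the
infima over covers of mesh `≤ ε`. The additive error `log |V|` does not depend on `ε`, so it
vanishes after division by `log (1 / ε) → ∞`.
-/

open Classical Filter

/-- The join `U^n = ⋁_{j=0}^{n-1} T^{-j} U` of a finite family of sets. -/
noncomputable def coverJoin {X : Type*} (T : X → X) (U : Finset (Set X)) (n : ℕ) :
    Finset (Set X) :=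
  (Fintype.piFinset fun _ : Fin n => U).image fun f => ⋂ j : Fin n, T^[(j : ℕ)] ⁻¹' f j

/-- `N(V, Z)`: minimal number of members of the family `V` needed to cover `Z`. -/
noncomputable def coverCard {X : Type*} (V : Finset (Set X)) (Z : Set X) : ℕ :=
  sInf {k : ℕ | ∃ W : Finset (Set X), W ⊆ V ∧ W.card = k ∧ Z ⊆ ⋃₀ ↑W}
/-- `N(W | W' ∨ π) = max { N(W, V ∩ π^{-1}(y)) : V ∈ W', y ∈ Y }`. -/
noncomputable def relCondCoverCard {X Y : Type*} (π : X → Y)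
    (W W' : Finset (Set X)) : ℕ :=
  ⨆ y : Y, ⨆ V ∈ W', coverCard W (V ∩ π ⁻¹' {y})

/-- The relative conditional entropy `h(T, U | V ∨ π)` of an open cover `U`
given the cover `V` and the factor map `π`. -/
noncomputable def relCondEntropy {X Y : Type*} (T : X → X) (π : X → Y)
    (U V : Finset (Set X)) : ℝ :=
  Filter.limsup (fun n : ℕ =>
    Real.log (relCondCoverCard π (coverJoin T U n) (coverJoin T V n)) / n) Filter.atTop

/-- `inf_{diam(U,d_X) ≤ ε} h(T, U | V ∨ π)` over finite open covers `U` of `X`. -/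
noncomputable def relCondEntropyInf {X Y : Type*} [MetricSpace X] (T : X → X)
    (π : X → Y) (V : Finset (Set X)) (ε : ℝ) : ℝ :=
  sInf {h : ℝ | ∃ U : Finset (Set X), (∀ A ∈ U, IsOpen A) ∧
    ⋃₀ (U : Set (Set X)) = Set.univ ∧
    (∀ A ∈ U, ∀ p ∈ A, ∀ q ∈ A, dist p q ≤ ε) ∧ h = relCondEntropy T π U V}

/-- The relative conditional upper metric mean dimension of `π`, computed with the
auxiliary cover `V` of `X`. -/
noncomputable def relCondMdim {X Y : Type*} [MetricSpace X] (T : X → X) (π : X → Y)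
    (V : Finset (Set X)) : ℝ :=
  Filter.limsup (fun ε : ℝ => relCondEntropyInf T π V ε / Real.log (1 / ε))
    (nhdsWithin 0 (Set.Ioi 0))

namespace Real

lemma log_natCast_le_log_natCast {a b : ℕ} (h : a ≤ b) : Real.log a ≤ Real.log b := by
  rcases Nat.eq_zero_or_pos a with rfl | ha
  · simpa using Real.log_natCast_nonneg b
  · exact Real.log_le_log (by exact_mod_cast ha) (by exact_mod_cast h)

lemma log_natCast_mul_le (a b : ℕ) : Real.log ((a * b : ℕ) : ℝ) ≤ Real.log a + Real.log b := by
  rcases Nat.eq_zero_or_pos a with rfl | ha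
  · simpa using Real.log_natCast_nonneg b
  rcases Nat.eq_zero_or_pos b with rfl | hb
  · simpa using Real.log_natCast_nonneg a
  push_cast
  exact (Real.log_mul (by positivity) (by positivity)).le

lemma log_natCast_div_le_log_add {a b c n : ℕ} (h : a ≤ c ^ n * b) :
    Real.log a / n ≤ Real.log c + Real.log b / n := by
  rcases n.eq_zero_or_pos with rfl | hn
  · simpa using Real.log_natCast_nonneg c
  have hlog : Real.log a ≤ n * Real.log c + Real.log b :=
    (log_natCast_le_log_natCast h).trans ((log_natCast_mul_le _ _).trans
      (by rw [Nat.cast_pow, Real.log_pow]))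
  have hn' : (0 : ℝ) < n := by exact_mod_cast hn
  rw [div_le_iff₀ hn', add_mul, div_mul_cancel₀ _ hn'.ne']
  linarith

end Real

section CoverCard

variable {X Y : Type*}

lemma coverCard_le_of_subset {W W' : Finset (Set X)} {Z : Set X} (hW' : W' ⊆ W)
    (hZ : Z ⊆ ⋃₀ ↑W') : coverCard W Z ≤ W'.card :=
  Nat.sInf_le ⟨W', hW', rfl, hZ⟩

lemma exists_subcover_card_eq_coverCard {W : Finset (Set X)} {Z : Set X} (hZ : Z ⊆ ⋃₀ ↑W) :
    ∃ W' ⊆ W, W'.card = coverCard W Z ∧ Z ⊆ ⋃₀ ↑W' := by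
  obtain ⟨W', hW', hcard, hcov⟩ := Nat.sInf_mem (⟨W.card, W, subset_rfl, rfl, hZ⟩ :
    {k : ℕ | ∃ W' : Finset (Set X), W' ⊆ W ∧ W'.card = k ∧ Z ⊆ ⋃₀ ↑W'}.Nonempty)
  exact ⟨W', hW', hcard, hcov⟩

/-- An uncoverable set has `coverCard` equal to `sInf ∅ = 0`, so the bound holds in every case. -/
lemma coverCard_le_card (W : Finset (Set X)) (Z : Set X) : coverCard W Z ≤ W.card := by
  by_cases hZ : Z ⊆ ⋃₀ ↑W
  · exact coverCard_le_of_subset subset_rfl hZ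
  · have : {k : ℕ | ∃ W' : Finset (Set X), W' ⊆ W ∧ W'.card = k ∧ Z ⊆ ⋃₀ ↑W'} = ∅ :=
      Set.eq_empty_of_forall_notMem fun k ⟨W', hW', _, hcov⟩ =>
        hZ (hcov.trans (Set.sUnion_mono (by exact_mod_cast hW')))
    simp [coverCard, this]

lemma coverCard_mono {W : Finset (Set X)} {Z Z' : Set X} (hZ : Z ⊆ Z') (hZ' : Z' ⊆ ⋃₀ ↑W) :
    coverCard W Z ≤ coverCard W Z' := by
  obtain ⟨W', hW', hcard, hcov⟩ := exists_subcover_card_eq_coverCard hZ'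
  exact hcard ▸ coverCard_le_of_subset hW' (hZ.trans hcov)

/-- Cover `Z` by a minimal subfamily of `W'`, then each of its pieces `V ∩ Z` by a minimal
subfamily of `W`. -/
lemma coverCard_le_coverCard_mul {W W' : Finset (Set X)} {Z : Set X} {m : ℕ}
    (hW : Z ⊆ ⋃₀ ↑W) (hW' : Z ⊆ ⋃₀ ↑W') (hm : ∀ V ∈ W', coverCard W (V ∩ Z) ≤ m) :
    coverCard W Z ≤ coverCard W' Z * m := by
  obtain ⟨W'', hW'', hcard, hcov⟩ := exists_subcover_card_eq_coverCard hW'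
  have hpiece : ∀ V : Set X, ∃ G ⊆ W, G.card = coverCard W (V ∩ Z) ∧ V ∩ Z ⊆ ⋃₀ ↑G :=
    fun V => exists_subcover_card_eq_coverCard (Set.inter_subset_right.trans hW)
  choose G hGW hGcard hGcov using hpiece
  calc coverCard W Z ≤ (W''.biUnion G).card := by
        refine coverCard_le_of_subset (Finset.biUnion_subset.2 fun V _ => hGW V) fun x hx => ?_
        obtain ⟨V, hV, hxV⟩ := hcov hx
        obtain ⟨A, hA, hxA⟩ := hGcov V ⟨hxV, hx⟩
        exact ⟨A, by simpa using ⟨V, hV, hA⟩, hxA⟩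
    _ ≤ ∑ V ∈ W'', (G V).card := Finset.card_biUnion_le
    _ ≤ W''.card * m := by
        simpa using Finset.sum_le_card_nsmul _ _ m fun V hV => hGcard V ▸ hm V (hW'' hV)
    _ = coverCard W' Z * m := by rw [hcard]

lemma relCondCoverCard_le {π : X → Y} {W W' : Finset (Set X)} {m : ℕ}
    (h : ∀ y, ∀ V ∈ W', coverCard W (V ∩ π ⁻¹' {y}) ≤ m) : relCondCoverCard π W W' ≤ m :=
  ciSup_le' fun y => ciSup_le' fun V => ciSup_le' fun hV => h y V hV

lemma coverCard_le_relCondCoverCard (π : X → Y) (W : Finset (Set X)) {W' : Finset (Set X)}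
    (y : Y) {V : Set X} (hV : V ∈ W') :
    coverCard W (V ∩ π ⁻¹' {y}) ≤ relCondCoverCard π W W' := by
  have hbdd : ∀ y', ⨆ V' ∈ W', coverCard W (V' ∩ π ⁻¹' {y'}) ≤ W.card := fun y' =>
    ciSup_le' fun V' => ciSup_le' fun _ => coverCard_le_card W _
  refine le_ciSup_of_le ⟨W.card, Set.forall_mem_range.2 hbdd⟩ y ?_
  refine le_ciSup_of_le ⟨W.card, Set.forall_mem_range.2 fun V' => ciSup_le' fun _ =>
    coverCard_le_card W _⟩ V ?_
  exact le_ciSup_of_le ⟨W.card, Set.forall_mem_range.2 fun _ => coverCard_le_card W _⟩ hV le_rfl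

lemma relCondCoverCard_le_card (π : X → Y) (W W' : Finset (Set X)) :
    relCondCoverCard π W W' ≤ W.card :=
  relCondCoverCard_le fun _ _ _ => coverCard_le_card W _

lemma relCondCoverCard_le_relCondCoverCard_univ (π : X → Y) {W : Finset (Set X)}
    (hW : ⋃₀ (W : Set (Set X)) = Set.univ) (W' : Finset (Set X)) :
    relCondCoverCard π W W' ≤ relCondCoverCard π W {Set.univ} :=
  relCondCoverCard_le fun y V _ =>
    (coverCard_mono (Set.inter_subset_inter_left _ (Set.subset_univ V)) (by simp [hW])).trans
      (coverCard_le_relCondCoverCard π W y (Finset.mem_singleton_self _))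

lemma relCondCoverCard_univ_le_mul (π : X → Y) {U V : Finset (Set X)}
    (hU : ⋃₀ (U : Set (Set X)) = Set.univ) (hV : ⋃₀ (V : Set (Set X)) = Set.univ) :
    relCondCoverCard π U {Set.univ} ≤ relCondCoverCard π V {Set.univ} * relCondCoverCard π U V := by
  refine relCondCoverCard_le fun y _ hA => ?_
  rw [Finset.mem_singleton.1 hA, Set.univ_inter]
  have hVy := coverCard_le_relCondCoverCard π V y (Finset.mem_singleton_self Set.univ)
  rw [Set.univ_inter] at hVy
  exact (coverCard_le_coverCard_mul (by simp [hU]) (by simp [hV])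
    fun A hA => coverCard_le_relCondCoverCard π U y hA).trans (Nat.mul_le_mul_right _ hVy)

end CoverCard

section Entropy

variable {X Y : Type*} (T : X → X) (π : X → Y)

lemma coverJoin_card_le (U : Finset (Set X)) (n : ℕ) : (coverJoin T U n).card ≤ U.card ^ n :=
  Finset.card_image_le.trans (by simp)

lemma coverJoin_sUnion_eq_univ {U : Finset (Set X)} (hU : ⋃₀ (U : Set (Set X)) = Set.univ)
    (n : ℕ) : ⋃₀ (coverJoin T U n : Set (Set X)) = Set.univ := by
  refine Set.eq_univ_of_forall fun x => ?_
  have hx : ∀ j : Fin n, ∃ A ∈ U, T^[(j : ℕ)] x ∈ A := fun j => by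
    simpa using (hU.symm ▸ Set.mem_univ _ : T^[(j : ℕ)] x ∈ ⋃₀ (U : Set (Set X)))
  choose f hfU hfx using hx
  exact ⟨⋂ j : Fin n, T^[(j : ℕ)] ⁻¹' f j, by simpa [coverJoin] using ⟨f, hfU, rfl⟩,
    Set.mem_iInter.2 hfx⟩

lemma coverJoin_univ (n : ℕ) : coverJoin T ({Set.univ} : Finset (Set X)) n = {Set.univ} := by
  ext s
  simp only [coverJoin, Finset.mem_image, Fintype.mem_piFinset, Finset.mem_singleton]
  constructor
  · rintro ⟨f, hf, rfl⟩
    simp [hf]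
  · rintro rfl
    exact ⟨fun _ => Set.univ, fun _ => rfl, by simp⟩

noncomputable def relCondEntropySeq (U V : Finset (Set X)) (n : ℕ) : ℝ :=
  Real.log (relCondCoverCard π (coverJoin T U n) (coverJoin T V n)) / n

variable {T π}

lemma relCondEntropySeq_nonneg (U V : Finset (Set X)) (n : ℕ) :
    0 ≤ relCondEntropySeq T π U V n :=
  div_nonneg (Real.log_natCast_nonneg _) n.cast_nonneg

lemma relCondEntropySeq_le_log_card (U V : Finset (Set X)) (n : ℕ) :
    relCondEntropySeq T π U V n ≤ Real.log U.card := by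
  have hN : relCondCoverCard π (coverJoin T U n) (coverJoin T V n) ≤ U.card ^ n * 1 :=
    ((relCondCoverCard_le_card π _ _).trans (coverJoin_card_le T U n)).trans_eq (mul_one _).symm
  simpa [relCondEntropySeq] using Real.log_natCast_div_le_log_add hN

lemma isBoundedUnder_relCondEntropySeq (U V : Finset (Set X)) :
    IsBoundedUnder (· ≤ ·) atTop (relCondEntropySeq T π U V) :=
  isBoundedUnder_of ⟨_, relCondEntropySeq_le_log_card U V⟩

lemma isCoboundedUnder_relCondEntropySeq (U V : Finset (Set X)) :
    IsCoboundedUnder (· ≤ ·) atTop (relCondEntropySeq T π U V) :=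
  isCoboundedUnder_le_of_le atTop (relCondEntropySeq_nonneg U V)

lemma relCondEntropy_nonneg (U V : Finset (Set X)) : 0 ≤ relCondEntropy T π U V :=
  le_limsup_of_frequently_le (Frequently.of_forall (relCondEntropySeq_nonneg U V))
    (isBoundedUnder_relCondEntropySeq U V)

lemma relCondEntropy_le_log_add {U V U' V' : Finset (Set X)} (c : ℕ)
    (h : ∀ n, relCondCoverCard π (coverJoin T U n) (coverJoin T V n) ≤
      c ^ n * relCondCoverCard π (coverJoin T U' n) (coverJoin T V' n)) :
    relCondEntropy T π U V ≤ Real.log c + relCondEntropy T π U' V' := by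
  change limsup (relCondEntropySeq T π U V) atTop ≤
    Real.log c + limsup (relCondEntropySeq T π U' V') atTop
  rw [← limsup_const_add _ _ _ (isBoundedUnder_relCondEntropySeq U' V')
    (isCoboundedUnder_relCondEntropySeq U' V')]
  refine limsup_le_limsup (Eventually.of_forall fun n => Real.log_natCast_div_le_log_add (h n))
    (isCoboundedUnder_relCondEntropySeq U V) ?_
  exact isBoundedUnder_of ⟨_, fun n => add_le_add_right (relCondEntropySeq_le_log_card U' V' n) _⟩

lemma relCondEntropy_le_relCondEntropy_univ {U : Finset (Set X)}
    (hU : ⋃₀ (U : Set (Set X)) = Set.univ) (V : Finset (Set X)) :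
    relCondEntropy T π U V ≤ relCondEntropy T π U {Set.univ} := by
  simpa using relCondEntropy_le_log_add (T := T) (π := π) (U := U) (V := V) 1 fun n => by
    simpa [coverJoin_univ] using
      relCondCoverCard_le_relCondCoverCard_univ π (coverJoin_sUnion_eq_univ T hU n) _

lemma relCondEntropy_univ_le_log_card_add {U V : Finset (Set X)}
    (hU : ⋃₀ (U : Set (Set X)) = Set.univ) (hV : ⋃₀ (V : Set (Set X)) = Set.univ) :
    relCondEntropy T π U {Set.univ} ≤ Real.log V.card + relCondEntropy T π U V :=
  relCondEntropy_le_log_add V.card fun n => by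
    rw [coverJoin_univ]
    exact (relCondCoverCard_univ_le_mul π (coverJoin_sUnion_eq_univ T hU n)
      (coverJoin_sUnion_eq_univ T hV n)).trans (Nat.mul_le_mul_right _
        ((relCondCoverCard_le_card π _ _).trans (coverJoin_card_le T V n)))

end Entropy

lemma ciInf_le_ciInf_add {ι : Sort*} {f g : ι → ℝ} {c : ℝ} (hf : BddBelow (Set.range f))
    (hc : 0 ≤ c) (h : ∀ i, f i ≤ g i + c) : ⨅ i, f i ≤ (⨅ i, g i) + c := by
  cases isEmpty_or_nonempty ι
  · simpa using hc
  · exact sub_le_iff_le_add.1 (le_ciInf fun i => sub_le_iff_le_add.2 ((ciInf_le hf i).trans (h i)))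

section EntropyInf

variable {X Y : Type*} [MetricSpace X] {T : X → X} {π : X → Y}

variable (X) in
def fineOpenCovers (ε : ℝ) : Set (Finset (Set X)) :=
  {U | (∀ A ∈ U, IsOpen A) ∧ ⋃₀ (U : Set (Set X)) = Set.univ ∧
    ∀ A ∈ U, ∀ p ∈ A, ∀ q ∈ A, dist p q ≤ ε}

lemma relCondEntropyInf_eq_iInf (V : Finset (Set X)) (ε : ℝ) :
    relCondEntropyInf T π V ε = ⨅ U : fineOpenCovers X ε, relCondEntropy T π U.1 V := by
  rw [relCondEntropyInf, iInf, Set.range]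
  congr 1
  ext h
  simp [fineOpenCovers, eq_comm, and_assoc]

lemma relCondEntropyInf_nonneg (V : Finset (Set X)) (ε : ℝ) : 0 ≤ relCondEntropyInf T π V ε := by
  rw [relCondEntropyInf_eq_iInf]
  exact Real.iInf_nonneg fun U => relCondEntropy_nonneg U.1 V

lemma bddBelow_range_relCondEntropy (V : Finset (Set X)) (ε : ℝ) :
    BddBelow (Set.range fun U : fineOpenCovers X ε => relCondEntropy T π U.1 V) :=
  ⟨0, by rintro _ ⟨U, rfl⟩; exact relCondEntropy_nonneg U.1 V⟩

lemma relCondEntropyInf_le_relCondEntropyInf_univ (V : Finset (Set X)) (ε : ℝ) :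
    relCondEntropyInf T π V ε ≤ relCondEntropyInf T π {Set.univ} ε := by
  simp only [relCondEntropyInf_eq_iInf]
  simpa using ciInf_le_ciInf_add (bddBelow_range_relCondEntropy V ε) le_rfl
    fun U => (relCondEntropy_le_relCondEntropy_univ U.2.2.1 V).trans_eq (add_zero _).symm

lemma relCondEntropyInf_univ_le_add {V : Finset (Set X)}
    (hV : ⋃₀ (V : Set (Set X)) = Set.univ) (ε : ℝ) :
    relCondEntropyInf T π {Set.univ} ε ≤ relCondEntropyInf T π V ε + Real.log V.card := by
  simp only [relCondEntropyInf_eq_iInf]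
  exact ciInf_le_ciInf_add (bddBelow_range_relCondEntropy _ ε) (Real.log_natCast_nonneg _)
    fun U => (relCondEntropy_univ_le_log_card_add U.2.2.1 hV).trans_eq (add_comm _ _)

end EntropyInf

open Topology in
lemma limsup_eq_of_le_of_le_add_of_tendsto_zero {ι : Type*} {l : Filter ι} [l.NeBot]
    {F G e : ι → ℝ} (hG : ∀ᶠ i in l, 0 ≤ G i) (hGF : ∀ᶠ i in l, G i ≤ F i)
    (hFG : ∀ᶠ i in l, F i ≤ G i + e i) (he : Tendsto e l (𝓝 0)) :
    limsup F l = limsup G l := by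
  have he_bdd : IsBoundedUnder (· ≤ ·) l e := he.isBoundedUnder_le
  by_cases hGb : IsBoundedUnder (· ≤ ·) l G
  · have hGe : IsBoundedUnder (· ≤ ·) l (G + e) := isBoundedUnder_le_add hGb he_bdd
    have hFb : IsBoundedUnder (· ≤ ·) l F := hGe.mono_le hFG
    refine le_antisymm ?_ (limsup_le_limsup hGF (isCoboundedUnder_le_of_eventually_le l hG) hFb)
    calc limsup F l ≤ limsup (G + e) l :=
          limsup_le_limsup hFG (isCoboundedUnder_le_of_eventually_le l
            (hG.and hGF |>.mono fun i h => h.1.trans h.2)) hGe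
      _ ≤ limsup G l + limsup e l :=
          limsup_add_le (isBoundedUnder_of_eventually_ge hG) hGb he.isCoboundedUnder_le he_bdd
      _ = limsup G l := by rw [he.limsup_eq, add_zero]
  · have hFb : ¬ IsBoundedUnder (· ≤ ·) l F := fun hFb => hGb (hFb.mono_le hGF)
    rw [Real.limsup_of_not_isBoundedUnder hFb, Real.limsup_of_not_isBoundedUnder hGb]

lemma limsup_div_log_one_div_eq {F G : ℝ → ℝ} {c : ℝ} (hG : ∀ ε, 0 ≤ G ε)
    (hGF : ∀ ε, G ε ≤ F ε) (hFG : ∀ ε, F ε ≤ G ε + c) :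
    limsup (fun ε => F ε / Real.log (1 / ε)) (nhdsWithin 0 (Set.Ioi 0)) =
      limsup (fun ε => G ε / Real.log (1 / ε)) (nhdsWithin 0 (Set.Ioi 0)) := by
  have hlog : Tendsto (fun ε : ℝ => Real.log (1 / ε)) (nhdsWithin 0 (Set.Ioi 0)) atTop := by
    simpa only [one_div, Function.comp_def] using
      Real.tendsto_log_atTop.comp (tendsto_inv_nhdsGT_zero (𝕜 := ℝ))
  have hpos : ∀ᶠ ε in nhdsWithin (0 : ℝ) (Set.Ioi 0), 0 < Real.log (1 / ε) :=
    hlog.eventually_gt_atTop 0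
  refine limsup_eq_of_le_of_le_add_of_tendsto_zero (e := fun ε => c / Real.log (1 / ε))
    ?_ ?_ ?_ (tendsto_const_nhds.div_atTop hlog)
  · filter_upwards [hpos] with ε hε using div_nonneg (hG ε) hε.le
  · filter_upwards [hpos] with ε hε using div_le_div_of_nonneg_right (hGF ε) hε.le
  · filter_upwards [hpos] with ε hε
    rw [← add_div]
    exact div_le_div_of_nonneg_right (hFG ε) hε.le

theorem relCondMdim_eq_relMdim_general {X Y : Type*} [MetricSpace X] (T : X → X) (π : X → Y)
    (V : Finset (Set X)) (hVcover : ⋃₀ (V : Set (Set X)) = Set.univ) :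
    relCondMdim T π V = relCondMdim T π ({Set.univ} : Finset (Set X)) :=
  (limsup_div_log_one_div_eq (relCondEntropyInf_nonneg V)
    (relCondEntropyInf_le_relCondEntropyInf_univ V) (relCondEntropyInf_univ_le_add hVcover)).symm

/-- Theorem 1.3: the relative conditional upper metric mean dimension (for any
finite open cover `V` of `X`) coincides with the relative upper metric mean
dimension, obtained by taking `V = {X}`. -/
theorem relCondMdim_eq_relMdim {X Y : Type*} [MetricSpace X] [CompactSpace X]
    [TopologicalSpace Y] [CompactSpace Y] (T : X → X) (S : Y → Y) (π : X → Y)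
    (hT : Continuous T) (hS : Continuous S) (hπ : Continuous π)
    (hsurj : Function.Surjective π) (hsemi : ∀ x, S (π x) = π (T x))
    (V : Finset (Set X)) (hVopen : ∀ A ∈ V, IsOpen A)
    (hVcover : ⋃₀ (V : Set (Set X)) = Set.univ) :
    relCondMdim T π V = relCondMdim T π ({Set.univ} : Finset (Set X)) :=
  relCondMdim_eq_relMdim_general T π V hVcover
end

section
/- Consider the random dynamical system of Example 5.4: Ω = {1,2}^ℤ with left shift θ, X a compact metric space with metric d, X^ℤ with metric D(x,y) = ∑_{n∈ℤ} d(x_n,y_n)/2^{|n|}, and T_ω = σ^{ω_0} (σ the left shift on X^ℤ). Then for every n ≥ 1, ε > 0 and every ω ∈ Ω, if E is a maximal (d,ε)-separated subset of X and y₀ ∈ X is fixed, the set E_{n,ω} of sequences (x_m)_{m∈ℤ} with x_m ∈ E for m ∈ {φ_j(1,ω) + 2φ_j(2,ω) : 0 ≤ j ≤ n−1} and x_m = y₀ otherwise is a (D_n^ω, ε)-separated set of X^ℤ of cardinality s(X,d,ε)^n; consequently s_n(X^ℤ, D, ω, ε) ≥ s(X,d,ε)^n. -/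
/-- The metric `D(x,y) = ∑_{n ∈ ℤ} d(x_n, y_n) / 2^{|n|}` on `X^ℤ`. -/
noncomputable def dZ {X : Type*} [MetricSpace X] (x y : ℤ → X) : ℝ :=
  ∑' n : ℤ, dist (x n) (y n) / 2 ^ n.natAbs

/-- The left shift by `k` steps on `X^ℤ`: `(σ^k x)_m = x_{m+k}`. -/
def shiftZ {X : Type*} (k : ℕ) (x : ℤ → X) : ℤ → X := fun m => x (m + k)

/-- `ψ_j(ω) = φ_j(1,ω) + 2 φ_j(2,ω) = ∑_{i=0}^{j-1} ω_i`, where the symbol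
`ω_i ∈ {1,2}` is encoded as `(ω i).val + 1` for `ω : ℤ → Fin 2`. -/
def psiSum (ω : ℤ → Fin 2) (j : ℕ) : ℕ :=
  ∑ i ∈ Finset.range j, ((ω (i : ℤ)).val + 1)

/-!
Two distinct points of `E_{n,ω}` differ at some time `ψ_j(ω)`, where both coordinates lie in `E`
and are therefore `ε`-apart; since `D(σ^k x, σ^k y) ≥ d(x_k, y_k)`, the points are
`(D_n^ω, ε)`-separated. Counting `E_{n,ω}` amounts to choosing an element of `E` at each of the `n`
distinct times `ψ_0(ω) < ⋯ < ψ_{n-1}(ω)`.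

The supremum defining `s_n` is taken in `ℕ`, where `sSup` of an unbounded set is `0`, so it must be
shown to be bounded: `D` is continuous for the product topology on the compact space `X^ℤ`, hence
finitely many open sets on each of which no pair is separated cover `X^ℤ`.
-/

open Filter Topology

lemma summable_inv_two_pow_natAbs : Summable fun m : ℤ => ((2 : ℝ) ^ m.natAbs)⁻¹ := by
  apply Summable.of_nat_of_neg <;>
    simpa [inv_pow] using summable_geometric_two

@[simp] lemma dZ_self {X : Type*} [MetricSpace X] (x : ℤ → X) : dZ x x = 0 := by simp [dZ]

section BoundedSpace

variable {X : Type*} [MetricSpace X] [BoundedSpace X]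

lemma norm_dist_div_two_pow_le (x y : ℤ → X) (m : ℤ) :
    ‖dist (x m) (y m) / 2 ^ m.natAbs‖ ≤ Metric.diam (Set.univ : Set X) * ((2 : ℝ) ^ m.natAbs)⁻¹ := by
  rw [Real.norm_of_nonneg (by positivity), div_eq_mul_inv]
  gcongr
  exact Metric.dist_le_diam_of_mem BoundedSpace.bounded_univ trivial trivial

lemma summable_dZ (x y : ℤ → X) : Summable fun m : ℤ => dist (x m) (y m) / 2 ^ m.natAbs :=
  .of_norm_bounded (summable_inv_two_pow_natAbs.mul_left _) (norm_dist_div_two_pow_le x y)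

lemma dist_zero_le_dZ (x y : ℤ → X) : dist (x 0) (y 0) ≤ dZ x y := by
  simpa [dZ] using (summable_dZ x y).le_tsum 0 fun _ _ => by positivity

lemma dist_le_dZ_shiftZ (k : ℕ) (x y : ℤ → X) :
    dist (x k) (y k) ≤ dZ (shiftZ k x) (shiftZ k y) := by
  simpa [shiftZ] using dist_zero_le_dZ (shiftZ k x) (shiftZ k y)

lemma continuous_dZ : Continuous fun p : (ℤ → X) × (ℤ → X) => dZ p.1 p.2 :=
  continuous_tsum (fun m => by fun_prop) (summable_inv_two_pow_natAbs.mul_left _)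
    fun m p => norm_dist_div_two_pow_le p.1 p.2 m

end BoundedSpace

lemma continuous_shiftZ {X : Type*} [TopologicalSpace X] (k : ℕ) :
    Continuous (shiftZ (X := X) k) :=
  continuous_pi fun _ => continuous_apply _

theorem CompactSpace.bddAbove_card_pairwise {Y : Type*} [TopologicalSpace Y] [CompactSpace Y]
    {R : Y → Y → Prop} (hR : ∀ y, ∀ᶠ p in 𝓝 (y, y), ¬ R p.1 p.2) :
    BddAbove {k : ℕ | ∃ F : Finset Y, (∀ x ∈ F, ∀ y ∈ F, x ≠ y → R x y) ∧ F.card = k} := by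
  have hU : ∀ y, ∃ U ∈ 𝓝 y, ∀ a ∈ U, ∀ b ∈ U, ¬ R a b := fun y =>
    eventually_prod_self_iff.1 (nhds_prod_eq (x := y) (y := y) ▸ hR y)
  choose U hUy hUR using hU
  obtain ⟨t, ht⟩ := CompactSpace.elim_nhds_subcover U hUy
  have hcenter : ∀ a, ∃ z ∈ t, a ∈ U z := fun a => by simpa using ht.ge (Set.mem_univ a)
  choose c hct haU using hcenter
  refine ⟨t.card, ?_⟩
  rintro k ⟨F, hF, rfl⟩
  refine Finset.card_le_card_of_injOn c (fun a _ => hct a) fun a ha b hb hab => ?_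
  by_contra hne
  exact hUR (c b) a (hab ▸ haU a) b (haU b) (hF a ha b hb hne)

lemma psiSum_strictMono (ω : ℤ → Fin 2) : StrictMono (psiSum ω) :=
  strictMono_nat_of_lt_succ fun k => by simp only [psiSum, Finset.sum_range_succ]; omega

section Configurations

variable {ι X : Type*} [DecidableEq ι]

def extendConst (s : Finset ι) (y₀ : X) (f : ∀ i ∈ s, X) : ι → X :=
  fun i => if h : i ∈ s then f i h else y₀

lemma extendConst_injective (s : Finset ι) (y₀ : X) : Function.Injective (extendConst s y₀) := by
  intro f g hfg
  funext i hi
  simpa [extendConst, hi] using congrFun hfg i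

/-- For `s = {ψ_j(ω) : j < n}` this is the set `E_{n,ω}` of the paper. -/
def configurations (s : Finset ι) (E : Finset X) (y₀ : X) : Finset (ι → X) :=
  (s.pi fun _ => E).map ⟨extendConst s y₀, extendConst_injective s y₀⟩

lemma card_configurations (s : Finset ι) (E : Finset X) (y₀ : X) :
    (configurations s E y₀).card = E.card ^ s.card := by
  simp [configurations, Finset.card_pi]

lemma mem_configurations {s : Finset ι} {E : Finset X} {y₀ : X} {x : ι → X} :
    x ∈ configurations s E y₀ ↔ (∀ i ∈ s, x i ∈ E) ∧ ∀ i ∉ s, x i = y₀ := by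
  simp only [configurations, Finset.mem_map, Finset.mem_pi, Function.Embedding.coeFn_mk]
  constructor
  · rintro ⟨f, hf, rfl⟩
    exact ⟨fun i hi => by simpa [extendConst, hi] using hf i hi,
      fun i hi => by simp [extendConst, hi]⟩
  · rintro ⟨hE, hy₀⟩
    refine ⟨fun i _ => x i, hE, funext fun i => ?_⟩
    by_cases hi : i ∈ s <;> simp [extendConst, hi, hy₀]

end Configurations

lemma exists_lt_dist_of_mem_configurations {ι X : Type*} [DecidableEq ι] [MetricSpace X]
    {s : Finset ι} {E : Finset X} {y₀ : X} {ε : ℝ}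
    (hE : ∀ a ∈ E, ∀ b ∈ E, a ≠ b → ε < dist a b) {x y : ι → X}
    (hx : x ∈ configurations s E y₀) (hy : y ∈ configurations s E y₀) (hxy : x ≠ y) :
    ∃ i ∈ s, ε < dist (x i) (y i) := by
  rw [mem_configurations] at hx hy
  obtain ⟨i, hi⟩ := Function.ne_iff.1 hxy
  have his : i ∈ s := by
    by_contra his
    exact hi ((hx.2 i his).trans (hy.2 i his).symm)
  exact ⟨i, his, hE _ (hx.1 i his) _ (hy.1 i his) hi⟩

lemma eventually_dZ_shiftZ_lt {X : Type*} [MetricSpace X] [BoundedSpace X] {ε : ℝ} (hε : 0 < ε)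
    (k : ℕ) (z : ℤ → X) : ∀ᶠ p in 𝓝 (z, z), dZ (shiftZ k p.1) (shiftZ k p.2) < ε := by
  have hcont : Continuous fun p : (ℤ → X) × (ℤ → X) => dZ (shiftZ k p.1) (shiftZ k p.2) :=
    continuous_dZ.comp ((continuous_shiftZ k).prodMap (continuous_shiftZ k))
  exact hcont.continuousAt.eventually_lt continuousAt_const (by simpa using hε)

theorem randomShift_separated_general {X : Type*} [MetricSpace X] [CompactSpace X]
    (ω : ℤ → Fin 2) (n : ℕ) (ε : ℝ) (hε : 0 < ε) (y₀ : X)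
    (E : Finset X) (hEsep : ∀ a ∈ E, ∀ b ∈ E, a ≠ b → ε < dist a b)
    (hEmax : ∀ F : Finset X, (∀ a ∈ F, ∀ b ∈ F, a ≠ b → ε < dist a b) →
      F.card ≤ E.card) :
    (∀ x ∈ {x : ℤ → X | (∀ j < n, x ((psiSum ω j : ℕ) : ℤ) ∈ E) ∧
        ∀ m : ℤ, (∀ j < n, m ≠ ((psiSum ω j : ℕ) : ℤ)) → x m = y₀},
      ∀ y ∈ {x : ℤ → X | (∀ j < n, x ((psiSum ω j : ℕ) : ℤ) ∈ E) ∧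
        ∀ m : ℤ, (∀ j < n, m ≠ ((psiSum ω j : ℕ) : ℤ)) → x m = y₀},
      x ≠ y → ∃ j < n, ε < dZ (shiftZ (psiSum ω j) x) (shiftZ (psiSum ω j) y)) ∧
    ({x : ℤ → X | (∀ j < n, x ((psiSum ω j : ℕ) : ℤ) ∈ E) ∧
        ∀ m : ℤ, (∀ j < n, m ≠ ((psiSum ω j : ℕ) : ℤ)) → x m = y₀}.ncard
      = E.card ^ n) ∧
    (sSup {k : ℕ | ∃ F : Finset X,
        (∀ a ∈ F, ∀ b ∈ F, a ≠ b → ε < dist a b) ∧ F.card = k}) ^ n ≤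
      sSup {k : ℕ | ∃ F : Finset (ℤ → X),
        (∀ x ∈ F, ∀ y ∈ F, x ≠ y →
          ∃ j < n, ε < dZ (shiftZ (psiSum ω j) x) (shiftZ (psiSum ω j) y)) ∧
        F.card = k} := by
  set S := (Finset.range n).image fun j => ((psiSum ω j : ℕ) : ℤ)
  have hcard : (configurations S E y₀).card = E.card ^ n := by
    have hinj : Function.Injective fun j => ((psiSum ω j : ℕ) : ℤ) :=
      Nat.cast_injective.comp (psiSum_strictMono ω).injective
    rw [card_configurations, Finset.card_image_of_injective _ hinj, Finset.card_range]
  have hA : {x : ℤ → X | (∀ j < n, x ((psiSum ω j : ℕ) : ℤ) ∈ E) ∧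
      ∀ m : ℤ, (∀ j < n, m ≠ ((psiSum ω j : ℕ) : ℤ)) → x m = y₀} = configurations S E y₀ := by
    ext x
    simp [mem_configurations, S, ne_comm]
  have hsep : ∀ x ∈ configurations S E y₀, ∀ y ∈ configurations S E y₀, x ≠ y →
      ∃ j < n, ε < dZ (shiftZ (psiSum ω j) x) (shiftZ (psiSum ω j) y) := by
    intro x hx y hy hxy
    obtain ⟨i, hi, hlt⟩ := exists_lt_dist_of_mem_configurations hEsep hx hy hxy
    obtain ⟨j, hj, rfl⟩ := Finset.mem_image.1 hi
    exact ⟨j, Finset.mem_range.1 hj, hlt.trans_le (dist_le_dZ_shiftZ _ x y)⟩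
  have hmax : sSup {k : ℕ | ∃ F : Finset X,
      (∀ a ∈ F, ∀ b ∈ F, a ≠ b → ε < dist a b) ∧ F.card = k} = E.card :=
    IsGreatest.csSup_eq ⟨⟨E, hEsep, rfl⟩, by rintro k ⟨F, hF, rfl⟩; exact hEmax F hF⟩
  refine ⟨hA ▸ hsep, by rw [hA, Set.ncard_coe_finset, hcard], ?_⟩
  rw [hmax, ← hcard]
  refine le_csSup (CompactSpace.bddAbove_card_pairwise fun z => ?_) ⟨_, hsep, rfl⟩
  filter_upwards [(Set.finite_lt_nat n).eventually_all.2 fun j _ =>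
    eventually_dZ_shiftZ_lt hε (psiSum ω j) z] with p hp
  rintro ⟨j, hj, hlt⟩
  exact (hp j hj).not_gt hlt

/-- Example 5.4: with `T_ω = σ^{ω_0}` driven by `Ω = {1,2}^ℤ`, for a maximal
`(d,ε)`-separated set `E ⊆ X` and base point `y₀`, the set `E_{n,ω}` of sequences
supported on the orbit-times `ψ_j(ω)` with values in `E` (and `y₀` elsewhere) is
`(D_n^ω, ε)`-separated of cardinality `s(X,d,ε)^n`; hence
`s_n(X^ℤ, D, ω, ε) ≥ s(X,d,ε)^n`. -/
theorem randomShift_separated {X : Type*} [MetricSpace X] [CompactSpace X]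
    (ω : ℤ → Fin 2) (n : ℕ) (hn : 1 ≤ n) (ε : ℝ) (hε : 0 < ε) (y₀ : X)
    (E : Finset X) (hEsep : ∀ a ∈ E, ∀ b ∈ E, a ≠ b → ε < dist a b)
    (hEmax : ∀ F : Finset X, (∀ a ∈ F, ∀ b ∈ F, a ≠ b → ε < dist a b) →
      F.card ≤ E.card) :
    (∀ x ∈ {x : ℤ → X | (∀ j < n, x ((psiSum ω j : ℕ) : ℤ) ∈ E) ∧
        ∀ m : ℤ, (∀ j < n, m ≠ ((psiSum ω j : ℕ) : ℤ)) → x m = y₀},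
      ∀ y ∈ {x : ℤ → X | (∀ j < n, x ((psiSum ω j : ℕ) : ℤ) ∈ E) ∧
        ∀ m : ℤ, (∀ j < n, m ≠ ((psiSum ω j : ℕ) : ℤ)) → x m = y₀},
      x ≠ y → ∃ j < n, ε < dZ (shiftZ (psiSum ω j) x) (shiftZ (psiSum ω j) y)) ∧
    ({x : ℤ → X | (∀ j < n, x ((psiSum ω j : ℕ) : ℤ) ∈ E) ∧
        ∀ m : ℤ, (∀ j < n, m ≠ ((psiSum ω j : ℕ) : ℤ)) → x m = y₀}.ncard
      = E.card ^ n) ∧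
    (sSup {k : ℕ | ∃ F : Finset X,
        (∀ a ∈ F, ∀ b ∈ F, a ≠ b → ε < dist a b) ∧ F.card = k}) ^ n ≤
      sSup {k : ℕ | ∃ F : Finset (ℤ → X),
        (∀ x ∈ F, ∀ y ∈ F, x ≠ y →
          ∃ j < n, ε < dZ (shiftZ (psiSum ω j) x) (shiftZ (psiSum ω j) y)) ∧
        F.card = k} :=
  randomShift_separated_general ω n ε hε y₀ E hEsep hEmax
end
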